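/- arXiv:2603.07693 — 2 statements merged into one kernel-verified Lean document; each statement's English description precedes it below -/
import Mathlib

section
/- Fix a natural number b ≥ 1, a real s ≥ 1, and θ ∈ (0,1). Define A_k = binom(b+k, b)^s · θ^{b+k} for k ∈ ℕ. Then sup_{k ∈ ℕ} A_k ≤ e^{bs} (θ^{-1/s} - 1)^{-bs}. -/
open Real

theorem binom_theta_sup_bound (b : ℕ) (hb : 1 ≤ b) (s : ℝ) (hs : 1 ≤ s)
    (θ : ℝ) (hθ0 : 0 < θ) (hθ1 : θ < 1) (k : ℕ) :
    (Nat.choose (b + k) b : ℝ) ^ s * θ ^ (b + k) ≤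
      Real.exp (b * s) * (θ ^ (-(1 / s)) - 1) ^ (-(b * s)) := by
  have hs0 : (0:ℝ) < s := lt_of_lt_of_le one_pos hs
  set x : ℝ := θ ^ (1/s : ℝ) with hxdef
  have hx0 : 0 < x := Real.rpow_pos_of_pos hθ0 _
  have hx1 : x < 1 := Real.rpow_lt_one hθ0.le hθ1 (by positivity)
  have h1x : 0 < 1 - x := by linarith
  have hbR : (0:ℝ) < b := by exact_mod_cast hb
  -- key analytic inequality
  have key : ∀ t : ℝ, 0 ≤ t → (1 + t) * x ^ t * (1 - x) ≤ 1 := by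
    intro t ht
    have hxt : x ^ t ≤ Real.exp (-(t * (1 - x))) := by
      rw [Real.rpow_def_of_pos hx0]
      apply Real.exp_le_exp.2
      have := Real.log_le_sub_one_of_pos hx0
      nlinarith
    set v : ℝ := (1 + t) * (1 - x) with hv
    have hv0 : 0 ≤ v := by positivity
    have h1 : (1 + t) * x ^ t * (1 - x) ≤ v * Real.exp (-(t * (1 - x))) := by
      rw [hv]
      have h1t : (0:ℝ) ≤ 1 + t := by linarith
      nlinarith [Real.exp_pos (-(t * (1 - x))), mul_le_mul_of_nonneg_left hxt h1t,
        mul_le_mul_of_nonneg_right (mul_le_mul_of_nonneg_left hxt h1t) h1x.le]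
    have hexp : -(t * (1 - x)) = (1 - x) - v := by ring
    have h2 : v * Real.exp (-(t * (1 - x))) = v * Real.exp (-v) * Real.exp (1 - x) := by
      rw [hexp, show (1 - x) - v = -v + (1 - x) by ring, Real.exp_add]; ring
    have h3 : v * Real.exp (-v) ≤ Real.exp (-1) := by
      have hv1 : v ≤ Real.exp (v - 1) := by linarith [Real.add_one_le_exp (v - 1)]
      have h := mul_le_mul_of_nonneg_right hv1 (Real.exp_pos (-v)).le
      rwa [← Real.exp_add, show v - 1 + -v = -1 by ring] at h
    have h4 : Real.exp (1 - x) ≤ Real.exp 1 := Real.exp_le_exp.2 (by linarith)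
    calc (1 + t) * x ^ t * (1 - x) ≤ v * Real.exp (-(t * (1 - x))) := h1
      _ = v * Real.exp (-v) * Real.exp (1 - x) := h2
      _ ≤ Real.exp (-1) * Real.exp 1 := by
          apply mul_le_mul h3 h4 (Real.exp_pos _).le (Real.exp_pos _).le
      _ = 1 := by rw [← Real.exp_add]; norm_num
  -- core inequality
  have core : (Nat.choose (b + k) b : ℝ) * x ^ (b + k) ≤ (Real.exp 1 * x / (1 - x)) ^ b := by
    set t : ℝ := (k : ℝ) / b with htdef
    have ht0 : 0 ≤ t := by positivity
    have h1t : 1 + t = ((b : ℝ) + k) / b := by rw [htdef]; field_simp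
    have hxk : (x ^ t) ^ b = x ^ k := by
      rw [← Real.rpow_natCast (x ^ t) b, ← Real.rpow_mul hx0.le]
      rw [htdef, div_mul_cancel₀]
      · exact Real.rpow_natCast x k
      · exact ne_of_gt hbR
    have hy : ((1 + t) * x ^ t * (1 - x)) ^ b
        = (((b:ℝ) + k) / b) ^ b * x ^ k * (1 - x) ^ b := by
      rw [mul_pow, mul_pow, hxk, h1t]
    have hyle : ((1 + t) * x ^ t * (1 - x)) ^ b ≤ 1 := by
      have hynn : 0 ≤ (1 + t) * x ^ t * (1 - x) := by positivity
      calc ((1 + t) * x ^ t * (1 - x)) ^ b ≤ 1 ^ b :=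
            pow_le_pow_left₀ hynn (key t ht0) b
        _ = 1 := one_pow b
    have hchoose : (Nat.choose (b + k) b : ℝ) ≤ ((b:ℝ) + k) ^ b / (Nat.factorial b) := by
      have := Nat.choose_le_pow_div (α := ℝ) b (b + k)
      push_cast at this ⊢
      convert this using 3
    have hfact : ((b:ℝ)) ^ b / (Nat.factorial b) ≤ Real.exp b :=
      Real.pow_div_factorial_le_exp (b:ℝ) (by positivity) b
    have hfactpos : (0:ℝ) < (Nat.factorial b : ℝ) := by exact_mod_cast Nat.factorial_pos b
    have hinv : (1:ℝ) / (Nat.factorial b) ≤ Real.exp b / (b:ℝ) ^ b := by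
      rw [div_le_div_iff₀ hfactpos (by positivity)]
      calc (1:ℝ) * (b:ℝ) ^ b = (b:ℝ) ^ b := one_mul _
        _ ≤ Real.exp b * (Nat.factorial b : ℝ) := by
            rw [div_le_iff₀ hfactpos] at hfact; linarith
    have hchoose2 : (Nat.choose (b + k) b : ℝ) ≤ Real.exp b * (((b:ℝ) + k) / b) ^ b := by
      calc (Nat.choose (b + k) b : ℝ) ≤ ((b:ℝ) + k) ^ b / (Nat.factorial b) := hchoose
        _ = ((b:ℝ) + k) ^ b * (1 / (Nat.factorial b)) := by ring
        _ ≤ ((b:ℝ) + k) ^ b * (Real.exp b / (b:ℝ) ^ b) :=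
            mul_le_mul_of_nonneg_left hinv (by positivity)
        _ = Real.exp b * (((b:ℝ) + k) / b) ^ b := by
            rw [div_pow]; ring
    have hxbk : x ^ (b + k) = x ^ b * x ^ k := pow_add x b k
    have hexpb : Real.exp (b:ℝ) = Real.exp 1 ^ b := by
      rw [← Real.exp_one_rpow (b:ℝ), Real.rpow_natCast]
    calc (Nat.choose (b + k) b : ℝ) * x ^ (b + k)
        ≤ (Real.exp b * (((b:ℝ) + k) / b) ^ b) * x ^ (b + k) :=
          mul_le_mul_of_nonneg_right hchoose2 (by positivity)
      _ = (Real.exp 1 * x) ^ b / (1 - x) ^ b *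
          ((((b:ℝ) + k) / b) ^ b * x ^ k * (1 - x) ^ b) := by
          rw [hxbk, hexpb, mul_pow]
          field_simp
      _ ≤ (Real.exp 1 * x) ^ b / (1 - x) ^ b * 1 := by
          apply mul_le_mul_of_nonneg_left _ (by positivity)
          rw [← hy]; exact hyle
      _ = (Real.exp 1 * x / (1 - x)) ^ b := by rw [mul_one, div_pow]
  -- assemble via rpow
  have hxs : x ^ s = θ := by
    rw [hxdef, ← Real.rpow_mul hθ0.le, one_div, inv_mul_cancel₀ (ne_of_gt hs0), Real.rpow_one]
  have hLHS : (Nat.choose (b + k) b : ℝ) ^ s * θ ^ (b + k)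
      = ((Nat.choose (b + k) b : ℝ) * x ^ (b + k)) ^ s := by
    rw [Real.mul_rpow (by positivity) (by positivity)]
    congr 1
    rw [← Real.rpow_natCast x (b + k), ← Real.rpow_mul hx0.le, mul_comm,
      Real.rpow_mul hx0.le, hxs, Real.rpow_natCast]
  have hθinv : θ ^ (-(1/s) : ℝ) - 1 = (1 - x) / x := by
    rw [Real.rpow_neg hθ0.le, ← hxdef]
    field_simp
  have hRHS : Real.exp (b * s) * (θ ^ (-(1/s) : ℝ) - 1) ^ (-(b * s) : ℝ)
      = ((Real.exp 1 * x / (1 - x)) ^ b) ^ s := by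
    rw [hθinv, Real.rpow_neg (by positivity), ← Real.inv_rpow (by positivity), inv_div,
      ← Real.exp_one_rpow ((b:ℝ) * s), ← Real.mul_rpow (Real.exp_pos 1).le (by positivity),
      ← Real.rpow_natCast ((Real.exp 1 * x / (1 - x))) b, ← Real.rpow_mul (by positivity),
      mul_div_assoc]
  rw [hLHS, hRHS]
  exact Real.rpow_le_rpow (by positivity) core hs0.le
end

section
/- Let s, σ ≥ 1, 0 < T < T₁, and let a be a smooth complex-valued function on an open set Ω ⊂ ℝ^{2n}, with N_{s,σ}(a,T₁)(x,ξ) < ∞ at a point (x,ξ). Then for every multi-index γ ∈ ℕ^n, N_{s,σ}(∂_x^γ a, T)(x,ξ) ≤ (e^s (T₁^{1/s} − T^{1/s})^{−s})^{|γ|} · |γ|!^s · N_{s,σ}(a, T₁)(x,ξ). -/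
open Real ENNReal

noncomputable section

/-- Phase space ℝ^n_x × ℝ^n_ξ. -/
abbrev Phase (n : ℕ) := (Fin n → ℝ) × (Fin n → ℝ)

/-- Directional derivative of a function on phase space. -/
def dirDeriv {n : ℕ} (v : Phase n) (f : Phase n → ℂ) : Phase n → ℂ :=
  fun p => fderiv ℝ f p v

/-- Unit vector in the i-th x-direction. -/
def eX {n : ℕ} (i : Fin n) : Phase n := (Pi.single i 1, 0)

/-- Unit vector in the i-th ξ-direction. -/
def eXi {n : ℕ} (i : Fin n) : Phase n := (0, Pi.single i 1)

/-- The iterated partial derivative ∂_x^α ∂_ξ^β. -/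
def mDeriv {n : ℕ} (α β : Fin n → ℕ) (f : Phase n → ℂ) : Phase n → ℂ :=
  (((List.ofFn fun i => List.replicate (α i) (eX i)).flatten ++
    (List.ofFn fun i => List.replicate (β i) (eXi i)).flatten).foldr dirDeriv f)

/-- Degree |α| of a multi-index. -/
def deg {n : ℕ} (α : Fin n → ℕ) : ℕ := ∑ i, α i

/-- Factorial α! of a multi-index. -/
def mfact {n : ℕ} (α : Fin n → ℕ) : ℕ := ∏ i, Nat.factorial (α i)

/-- The Gevrey resummation N_{s,σ}(a,T)(x,ξ), valued in [0,∞]. -/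
def GNorm {n : ℕ} (s σ T : ℝ) (a : Phase n → ℂ) (p : Phase n) : ℝ≥0∞ :=
  ∑' αβ : (Fin n → ℕ) × (Fin n → ℕ),
    ENNReal.ofReal (‖mDeriv αβ.1 αβ.2 a p‖ * T ^ (deg αβ.1 + deg αβ.2) /
      ((Nat.factorial (deg αβ.1) : ℝ) ^ s * (Nat.factorial (deg αβ.2) : ℝ) ^ σ))

end

section Smooth

lemma contDiff_dirDeriv {n : ℕ} (v : Phase n) {f : Phase n → ℂ}
    (hf : ContDiff ℝ (⊤ : ℕ∞) f) : ContDiff ℝ (⊤ : ℕ∞) (dirDeriv v f) := by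
  exact (hf.fderiv_right (by simp)).clm_apply contDiff_const

lemma dirDeriv_comm {n : ℕ} {f : Phase n → ℂ} (hf : ContDiff ℝ (⊤ : ℕ∞) f)
    (v w : Phase n) : dirDeriv v (dirDeriv w f) = dirDeriv w (dirDeriv v f) := by
  funext p
  have h1 : ContDiff ℝ (⊤ : ℕ∞) (fderiv ℝ f) := hf.fderiv_right (by simp)
  have hdf : DifferentiableAt ℝ (fderiv ℝ f) p :=
    (h1.differentiable (by simp)).differentiableAt
  have key : ∀ u z : Phase n, dirDeriv u (dirDeriv z f) p = fderiv ℝ (fderiv ℝ f) p u z := by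
    intro u z
    show fderiv ℝ (fun q => (fderiv ℝ f q) z) p u = _
    rw [fderiv_clm_apply hdf (differentiableAt_const z)]
    simp
  rw [key, key]
  exact (hf.contDiffAt.isSymmSndFDerivAt (by rw [minSmoothness_of_isRCLikeNormedField]; exact WithTop.coe_le_coe.mpr le_top)) v w

lemma contDiff_foldr {n : ℕ} (l : List (Phase n)) {f : Phase n → ℂ}
    (hf : ContDiff ℝ (⊤ : ℕ∞) f) : ContDiff ℝ (⊤ : ℕ∞) (l.foldr dirDeriv f) := by
  induction l with
  | nil => exact hf
  | cons v l ih => exact contDiff_dirDeriv v ih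

lemma foldr_perm {n : ℕ} {l₁ l₂ : List (Phase n)} (h : l₁.Perm l₂) {f : Phase n → ℂ}
    (hf : ContDiff ℝ (⊤ : ℕ∞) f) : l₁.foldr dirDeriv f = l₂.foldr dirDeriv f := by
  induction h with
  | nil => rfl
  | cons x h ih => simp only [List.foldr_cons, ih]
  | swap x y l =>
      simp only [List.foldr_cons]
      exact dirDeriv_comm (contDiff_foldr l hf) y x
  | trans h₁ h₂ ih₁ ih₂ => rw [ih₁, ih₂]

lemma perm_shuffle {X : Type*} (a b FA FB : List X) :
    ((a ++ b) ++ (FA ++ FB)).Perm ((a ++ FA) ++ (b ++ FB)) := by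
  have h : ((b ++ FA) ++ FB).Perm ((FA ++ b) ++ FB) :=
    (List.perm_append_comm (l₁ := b) (l₂ := FA)).append_right FB
  have e1 : (a ++ b) ++ (FA ++ FB) = a ++ ((b ++ FA) ++ FB) := by
    simp only [List.append_assoc]
  have e2 : (a ++ FA) ++ (b ++ FB) = a ++ ((FA ++ b) ++ FB) := by
    simp only [List.append_assoc]
  rw [e1, e2]
  exact h.append_left a

lemma flatten_ofFn_append_perm {X : Type*} : ∀ (m : ℕ) (A B : Fin m → List X),
    (List.ofFn fun i => A i ++ B i).flatten.Perm
      ((List.ofFn A).flatten ++ (List.ofFn B).flatten)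
  | 0, A, B => by simp
  | (m + 1), A, B => by
    have ih := flatten_ofFn_append_perm m (fun i => A i.succ) (fun i => B i.succ)
    simp only [List.ofFn_succ, List.flatten_cons]
    exact (ih.append_left _).trans (perm_shuffle _ _ _ _)

lemma mDeriv_mDeriv {n : ℕ} (α β γ : Fin n → ℕ) {a : Phase n → ℂ}
    (ha : ContDiff ℝ (⊤ : ℕ∞) a) :
    mDeriv α β (mDeriv γ 0 a) = mDeriv (α + γ) β a := by
  unfold mDeriv
  have h0 : (List.ofFn fun i : Fin n =>
      List.replicate ((0 : Fin n → ℕ) i) (eXi i)).flatten = [] := by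
    simp
  rw [h0, List.append_nil]
  set LA := (List.ofFn fun i => List.replicate (α i) (eX i)).flatten with hLA
  set LB := (List.ofFn fun i => List.replicate (β i) (eXi i)).flatten with hLB
  set LG := (List.ofFn fun i => List.replicate (γ i) (eX i)).flatten with hLG
  rw [← List.foldr_append]
  have hperm : ((LA ++ LB) ++ LG).Perm
      ((List.ofFn fun i => List.replicate ((α + γ) i) (eX i)).flatten ++ LB) := by
    have h1 : (List.ofFn fun i => List.replicate ((α + γ) i) (eX i)).flatten.Perm (LA ++ LG) := by
      have he : (List.ofFn fun i => List.replicate ((α + γ) i) (eX i)) =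
          (List.ofFn fun i => List.replicate (α i) (eX i) ++ List.replicate (γ i) (eX i)) := by
        simp only [Pi.add_apply, List.replicate_add]
      rw [he, hLA, hLG]
      exact flatten_ofFn_append_perm n _ _
    have h2 : ((LA ++ LB) ++ LG).Perm ((LA ++ LG) ++ LB) := by
      have e1 : (LA ++ LB) ++ LG = LA ++ (LB ++ LG) := by simp only [List.append_assoc]
      have e2 : (LA ++ LG) ++ LB = LA ++ (LG ++ LB) := by simp only [List.append_assoc]
      rw [e1, e2]
      exact (List.perm_append_comm).append_left LA
    exact h2.trans ((h1.symm).append_right LB)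
  exact foldr_perm hperm ha

end Smooth


section Scalar

lemma nat_entropy (k b : ℕ) : (k+b).choose b * k^k * b^b ≤ (k+b)^(k+b) := by
  have h := Finset.single_le_sum (f := fun i => k^i * b^((k+b)-i) * (k+b).choose i)
      (fun i _ => Nat.zero_le _) (Finset.mem_range.2 (by omega) : k ∈ Finset.range (k+b+1))
  rw [add_pow]
  calc (k+b).choose b * k^k * b^b = k^k * b^((k+b)-k) * (k+b).choose k := by
        rw [Nat.choose_symm_add, Nat.add_sub_cancel_left]; ring
    _ ≤ _ := h

lemma core_ineq {u : ℝ} (h0 : 0 < u) (h1 : u < 1) (k b : ℕ) :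
    ((k+b).choose b : ℝ) * (u^k * (1-u)^b) ≤ 1 := by
  have h1u : (0:ℝ) < 1 - u := by linarith
  rcases Nat.eq_zero_or_pos k with hk | hk
  · subst hk
    simp only [Nat.zero_add, Nat.choose_self, Nat.cast_one, one_mul, pow_zero]
    exact pow_le_one₀ h1u.le (by linarith)
  rcases Nat.eq_zero_or_pos b with hb | hb
  · subst hb
    simp only [Nat.add_zero, Nat.choose_zero_right, Nat.cast_one, one_mul, pow_zero, mul_one]
    exact pow_le_one₀ h0.le h1.le
  set m := k + b with hm
  have hmpos : 0 < m := by omega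
  have hmR : (0:ℝ) < (m:ℝ) := by exact_mod_cast hmpos
  have hkR : (0:ℝ) < (k:ℝ) := by exact_mod_cast hk
  have hbR : (0:ℝ) < (b:ℝ) := by exact_mod_cast hb
  have hw : (k:ℝ)/m + (b:ℝ)/m = 1 := by
    field_simp
    exact_mod_cast hm.symm
  have hgm := Real.geom_mean_le_arith_mean2_weighted
      (by positivity) (by positivity)
      (p₁ := u*m/k) (p₂ := (1-u)*m/b) (by positivity) (by positivity) hw
  have harith : (k:ℝ)/m*(u*m/k) + (b:ℝ)/m*((1-u)*m/b) = 1 := by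
    field_simp
    ring
  rw [harith] at hgm
  have hX0 : (0:ℝ) ≤ (u*m/k)^((k:ℝ)/m) * ((1-u)*m/b)^((b:ℝ)/m) := by positivity
  have hXm : ((u*m/k)^((k:ℝ)/m) * ((1-u)*m/b)^((b:ℝ)/m))^(m:ℕ)
      = (u*m/k)^k * ((1-u)*m/b)^b := by
    rw [mul_pow, ← Real.rpow_natCast ((u*m/k)^((k:ℝ)/m)) m,
      ← Real.rpow_natCast (((1-u)*m/b)^((b:ℝ)/m)) m,
      ← Real.rpow_mul (by positivity), ← Real.rpow_mul (by positivity),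
      div_mul_cancel₀ _ hmR.ne', div_mul_cancel₀ _ hmR.ne',
      Real.rpow_natCast, Real.rpow_natCast]
  have hfinal : (u*m/k)^k * ((1-u)*m/b)^b ≤ 1 := by
    rw [← hXm]
    exact pow_le_one₀ hX0 hgm
  have h2 : (u*(m:ℝ))^k * ((1-u)*m)^b ≤ (k:ℝ)^k * (b:ℝ)^b := by
    rw [div_pow, div_pow, div_mul_div_comm, div_le_one (by positivity)] at hfinal
    linarith
  have h3 : u^k * (1-u)^b * (m:ℝ)^m ≤ (k:ℝ)^k * (b:ℝ)^b := by
    calc u^k * (1-u)^b * (m:ℝ)^m = (u*(m:ℝ))^k * ((1-u)*m)^b := by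
          rw [mul_pow, mul_pow, hm, pow_add]; ring
      _ ≤ _ := h2
  have hent : ((k+b).choose b : ℝ) * ((k:ℝ)^k * (b:ℝ)^b) ≤ (m:ℝ)^m := by
    rw [hm, ← mul_assoc]
    exact_mod_cast nat_entropy k b
  calc ((k+b).choose b : ℝ) * (u^k * (1-u)^b)
      ≤ ((k+b).choose b : ℝ) * ((k:ℝ)^k * (b:ℝ)^b / (m:ℝ)^m) := by
        apply mul_le_mul_of_nonneg_left _ (Nat.cast_nonneg _)
        rw [le_div_iff₀ (by positivity)]
        exact h3
    _ ≤ 1 := by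
        rw [← mul_div_assoc, div_le_one (by positivity)]
        exact hent

lemma key_ineq {s T T₁ : ℝ} (hs : 1 ≤ s) (hT : 0 < T) (hTT₁ : T < T₁) (k b : ℕ) :
    (((k+b).choose b : ℝ))^s * T^k ≤
      (Real.exp 1 ^ s * (T₁^(1/s) - T^(1/s))^(-s))^b * T₁^(k+b) := by
  have hT₁ : 0 < T₁ := hT.trans hTT₁
  have hs0 : 0 < s := lt_of_lt_of_le one_pos hs
  set u := (T/T₁) ^ (1/s) with hu
  have hθ0 : 0 < T/T₁ := by positivity
  have hθ1 : T/T₁ < 1 := (div_lt_one hT₁).2 hTT₁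
  have hu0 : 0 < u := Real.rpow_pos_of_pos hθ0 _
  have hu1 : u < 1 := Real.rpow_lt_one hθ0.le hθ1 (by positivity)
  have h1u : (0:ℝ) < 1 - u := by linarith
  have hus : u ^ s = T / T₁ := by
    rw [hu, ← Real.rpow_mul hθ0.le, one_div, inv_mul_cancel₀ hs0.ne', Real.rpow_one]
  have hT1s : T ^ (1/s) = u * T₁ ^ (1/s) := by
    rw [hu, Real.div_rpow hT.le hT₁.le, div_mul_cancel₀]
    exact (Real.rpow_pos_of_pos hT₁ _).ne'
  have hC0 : T₁^(1/s) - T^(1/s) = (1-u) * T₁^(1/s) := by rw [hT1s]; ring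
  have hE : (T₁^(1/s) - T^(1/s))^(-s) = ((1-u)⁻¹)^s * T₁⁻¹ := by
    rw [hC0, Real.mul_rpow h1u.le (Real.rpow_nonneg hT₁.le _), Real.rpow_neg h1u.le,
      ← Real.inv_rpow h1u.le, ← Real.rpow_mul hT₁.le,
      show (1/s)*(-s) = -1 by field_simp, Real.rpow_neg_one]
  have hcore := core_ineq hu0 hu1 k b
  have h2 : ((k+b).choose b : ℝ) * u^k ≤ ((1-u)⁻¹)^b := by
    rw [inv_pow, ← one_div, le_div_iff₀ (by positivity), mul_assoc]
    exact hcore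
  have h3 := Real.rpow_le_rpow (by positivity) h2 hs0.le
  have hL : (((k+b).choose b : ℝ) * u^k)^s = ((k+b).choose b : ℝ)^s * (T/T₁)^k := by
    rw [Real.mul_rpow (Nat.cast_nonneg _) (by positivity), ← Real.rpow_natCast u k,
      ← Real.rpow_mul hu0.le, mul_comm (k:ℝ) s, Real.rpow_mul hu0.le, hus,
      Real.rpow_natCast]
  have hR : (((1-u)⁻¹)^b)^s = (((1-u)⁻¹)^s)^b := by
    rw [← Real.rpow_natCast ((1-u)⁻¹) b, ← Real.rpow_mul (by positivity),
      mul_comm (b:ℝ) s, Real.rpow_mul (by positivity), Real.rpow_natCast]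
  rw [hL, hR] at h3
  have hD : ((1-u)⁻¹)^s ≤ Real.exp 1 ^ s * (T₁^(1/s) - T^(1/s))^(-s) * T₁ := by
    rw [hE, Real.exp_one_rpow]
    have h4 : ((1-u)⁻¹)^s ≤ Real.exp s * ((1-u)⁻¹)^s :=
      le_mul_of_one_le_left (by positivity) (Real.one_le_exp hs0.le)
    calc ((1-u)⁻¹)^s ≤ Real.exp s * ((1-u)⁻¹)^s := h4
      _ = Real.exp s * (((1-u)⁻¹)^s * T₁⁻¹) * T₁ := by field_simp
  have hTk : T^k = (T/T₁)^k * T₁^k := by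
    rw [div_pow]
    field_simp
  calc ((k+b).choose b : ℝ)^s * T^k
      = (((k+b).choose b : ℝ)^s * (T/T₁)^k) * T₁^k := by rw [hTk]; ring
    _ ≤ (((1-u)⁻¹)^s)^b * T₁^k :=
        mul_le_mul_of_nonneg_right h3 (by positivity)
    _ ≤ (Real.exp 1 ^ s * (T₁^(1/s) - T^(1/s))^(-s) * T₁)^b * T₁^k := by
        apply mul_le_mul_of_nonneg_right _ (by positivity)
        exact pow_le_pow_left₀ (by positivity) hD b
    _ = (Real.exp 1 ^ s * (T₁^(1/s) - T^(1/s))^(-s))^b * T₁^(k+b) := by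
        rw [mul_pow, pow_add]; ring


lemma term_ineq {s σ T T₁ : ℝ} (hs : 1 ≤ s) (hσ : 1 ≤ σ) (hT : 0 < T) (hTT₁ : T < T₁)
    (k₁ k₂ b : ℕ) {A : ℝ} (hA : 0 ≤ A) :
    A * T^(k₁+k₂) / ((k₁.factorial : ℝ)^s * (k₂.factorial : ℝ)^σ) ≤
      (Real.exp 1 ^ s * (T₁^(1/s) - T^(1/s))^(-s))^b * (b.factorial : ℝ)^s *
        (A * T₁^((k₁+b)+k₂) / (((k₁+b).factorial : ℝ)^s * (k₂.factorial : ℝ)^σ)) := by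
  have hT₁ : 0 < T₁ := hT.trans hTT₁
  have hs0 : 0 < s := lt_of_lt_of_le one_pos hs
  set E := Real.exp 1 ^ s * (T₁^(1/s) - T^(1/s))^(-s) with hEdef
  have hkey := key_ineq hs hT hTT₁ (k₁+k₂) b
  have hfac : ((k₁+b).factorial : ℝ) =
      ((k₁+b).choose b : ℝ) * (k₁.factorial : ℝ) * (b.factorial : ℝ) := by
    exact_mod_cast congrArg (Nat.cast (R := ℝ))
      (Nat.add_choose_mul_factorial_mul_factorial k₁ b).symm
  have hcc : ((k₁+b).choose b : ℝ)^s ≤ ((k₁+k₂+b).choose b : ℝ)^s := by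
    apply Real.rpow_le_rpow (Nat.cast_nonneg _) _ hs0.le
    exact_mod_cast Nat.choose_le_choose b (by omega)
  have h6 : ((k₁+b).choose b : ℝ)^s * T^(k₁+k₂) ≤ E^b * T₁^(k₁+k₂+b) :=
    le_trans (mul_le_mul_of_nonneg_right hcc (by positivity)) hkey
  have h5 : T^(k₁+k₂) * (((k₁+b).factorial : ℝ))^s ≤
      E^b * (b.factorial : ℝ)^s * T₁^((k₁+b)+k₂) * ((k₁.factorial : ℝ))^s := by
    rw [hfac, Real.mul_rpow (by positivity) (by positivity),
      Real.mul_rpow (Nat.cast_nonneg _) (by positivity)]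
    calc T^(k₁+k₂) * (((k₁+b).choose b : ℝ)^s * (k₁.factorial : ℝ)^s * (b.factorial : ℝ)^s)
        = (((k₁+b).choose b : ℝ)^s * T^(k₁+k₂)) * ((k₁.factorial : ℝ)^s * (b.factorial : ℝ)^s) := by
          ring
      _ ≤ (E^b * T₁^(k₁+k₂+b)) * ((k₁.factorial : ℝ)^s * (b.factorial : ℝ)^s) :=
          mul_le_mul_of_nonneg_right h6 (by positivity)
      _ = E^b * (b.factorial : ℝ)^s * T₁^((k₁+b)+k₂) * ((k₁.factorial : ℝ))^s := by
          rw [show k₁+k₂+b = (k₁+b)+k₂ from by omega]; ring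
  rw [mul_div_assoc' (E^b * (b.factorial : ℝ)^s), div_le_div_iff₀ (by positivity) (by positivity)]
  calc A * T^(k₁+k₂) * (((k₁+b).factorial : ℝ)^s * (k₂.factorial : ℝ)^σ)
      = (A * (k₂.factorial : ℝ)^σ) * (T^(k₁+k₂) * ((k₁+b).factorial : ℝ)^s) := by ring
    _ ≤ (A * (k₂.factorial : ℝ)^σ) *
          (E^b * (b.factorial : ℝ)^s * T₁^((k₁+b)+k₂) * ((k₁.factorial : ℝ))^s) :=
        mul_le_mul_of_nonneg_left h5 (by positivity)
    _ = E^b * (b.factorial : ℝ)^s * (A * T₁^((k₁+b)+k₂)) *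
          ((k₁.factorial : ℝ)^s * (k₂.factorial : ℝ)^σ) := by ring

end Scalar

theorem gevrey_resummation_deriv {n : ℕ} (s σ : ℝ) (hs : 1 ≤ s) (hσ : 1 ≤ σ)
    (T T₁ : ℝ) (hT : 0 < T) (hTT₁ : T < T₁)
    (a : Phase n → ℂ) (ha : ContDiff ℝ (⊤ : ℕ∞) a) (p : Phase n)
    (hfa : GNorm s σ T₁ a p < ⊤) (γ : Fin n → ℕ) :
    GNorm s σ T (mDeriv γ 0 a) p ≤
      ENNReal.ofReal ((Real.exp 1 ^ s * (T₁ ^ (1 / s) - T ^ (1 / s)) ^ (-s)) ^ (deg γ) *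
          (Nat.factorial (deg γ) : ℝ) ^ s) *
        GNorm s σ T₁ a p := by
  have ha' : ContDiff ℝ (⊤ : ℕ∞) a := ha.of_le (by simp)
  set K : ℝ := (Real.exp 1 ^ s * (T₁ ^ (1 / s) - T ^ (1 / s)) ^ (-s)) ^ (deg γ) *
      (Nat.factorial (deg γ) : ℝ) ^ s with hK
  have hs0 : 0 < s := lt_of_lt_of_le one_pos hs
  have hC0pos : 0 < T₁ ^ (1/s) - T ^ (1/s) := by
    have := Real.rpow_lt_rpow hT.le hTT₁ (by positivity : (0:ℝ) < 1/s)
    linarith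
  have hK0 : 0 ≤ K := by
    apply mul_nonneg
    · apply pow_nonneg
      exact mul_nonneg (Real.rpow_nonneg (Real.exp_pos 1).le s)
        (Real.rpow_nonneg hC0pos.le _)
    · exact Real.rpow_nonneg (Nat.cast_nonneg _) s
  set g : (Fin n → ℕ) × (Fin n → ℕ) → ℝ≥0∞ := fun y =>
    ENNReal.ofReal (‖mDeriv y.1 y.2 a p‖ * T₁ ^ (deg y.1 + deg y.2) /
      ((Nat.factorial (deg y.1) : ℝ) ^ s * (Nat.factorial (deg y.2) : ℝ) ^ σ)) with hg
  have hGN : GNorm s σ T₁ a p = ∑' y, g y := rfl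
  have hinj : Function.Injective
      (fun x : (Fin n → ℕ) × (Fin n → ℕ) => (x.1 + γ, x.2)) := by
    intro x y hxy
    simp only [Prod.mk.injEq] at hxy
    exact Prod.ext (add_left_injective γ hxy.1) hxy.2
  calc GNorm s σ T (mDeriv γ 0 a) p
      ≤ ∑' αβ : (Fin n → ℕ) × (Fin n → ℕ), ENNReal.ofReal K * g (αβ.1 + γ, αβ.2) := by
        rw [GNorm]
        apply ENNReal.tsum_le_tsum
        intro αβ
        rw [mDeriv_mDeriv αβ.1 αβ.2 γ ha', ← ENNReal.ofReal_mul hK0]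
        apply ENNReal.ofReal_le_ofReal
        have hdeg : deg (αβ.1 + γ) = deg αβ.1 + deg γ := by
          simp [deg, Finset.sum_add_distrib]
        simp only [hg, hdeg]
        rw [hK]
        exact term_ineq hs hσ hT hTT₁ (deg αβ.1) (deg αβ.2) (deg γ) (norm_nonneg _)
    _ = ENNReal.ofReal K * ∑' αβ : (Fin n → ℕ) × (Fin n → ℕ), g (αβ.1 + γ, αβ.2) :=
        ENNReal.tsum_mul_left
    _ ≤ ENNReal.ofReal K * ∑' y, g y := by
        apply mul_le_mul_right
        exact tsum_comp_le_tsum_of_injective hinj g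
    _ = ENNReal.ofReal K * GNorm s σ T₁ a p := by rw [hGN]
end
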